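/- arXiv:2009.02646 — 2 statements merged into one kernel-verified Lean document; each statement's English description precedes it below -/
import Mathlib

section
/- Let φ ∈ L²(Ω) on the square Ω = [0,1]² (with Lebesgue measure) and let m_k = ∫_Ω β₁^{k₁} β₂^{k₂} φ(β) dβ be its moment double sequence. Then for every n = (n₁,n₂) ∈ ℕ², (n₁+1)(n₂+1) · ∑_{k₁=0}^{n₁} ∑_{k₂=0}^{n₂} [binom(n₁,k₁) binom(n₂,k₂) · Δ₁^{n₁−k₁} Δ₂^{n₂−k₂} m_{k₁,k₂}]² ≤ ‖φ‖₂², where ‖φ‖₂ is the L²-norm of φ. -/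
open MeasureTheory

/-- The partial difference operator in the first index:
`(Δ₁m)_{k₁,k₂} = m_{k₁,k₂} − m_{k₁+1,k₂}`. -/
def D1 (m : ℕ → ℕ → ℝ) : ℕ → ℕ → ℝ := fun k1 k2 => m k1 k2 - m (k1 + 1) k2

/-- The partial difference operator in the second index:
`(Δ₂m)_{k₁,k₂} = m_{k₁,k₂} − m_{k₁,k₂+1}`. -/
def D2 (m : ℕ → ℕ → ℝ) : ℕ → ℕ → ℝ := fun k1 k2 => m k1 k2 - m k1 (k2 + 1)

/-- The unit square `Ω = [0,1]² ⊂ ℝ²`. -/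
def unitSquare : Set (ℝ × ℝ) := Set.Icc (0 : ℝ) 1 ×ˢ Set.Icc (0 : ℝ) 1

/-! Write `w_k(β) = b_{n₁,k₁}(β₁) b_{n₂,k₂}(β₂)` with the Bernstein polynomials `b_{n,k}`.
Since `Δ₁` and `Δ₂` act on moment sequences by multiplying the density by `1 - β₁` and
`1 - β₂`, the `k`-th term of the sum is `∫ w_k φ`. The weights are nonnegative, sum to `1`,
and all have integral `1/((n₁+1)(n₂+1))`, so the weighted Cauchy–Schwarz inequality
`(∫ w_k φ)² ≤ (∫ w_k)(∫ w_k φ²)`, summed over `k`, gives the bound. -/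

open Finset Polynomial

theorem sq_integral_mul_le_integral_mul_integral_mul_sq {α : Type*} [MeasurableSpace α]
    {μ : Measure α} {g f : α → ℝ} (hg : 0 ≤ᵐ[μ] g) (hg_int : Integrable g μ)
    (hgf : Integrable (fun x => g x * f x) μ) (hgf2 : Integrable (fun x => g x * f x ^ 2) μ) :
    (∫ x, g x * f x ∂μ) ^ 2 ≤ (∫ x, g x ∂μ) * ∫ x, g x * f x ^ 2 ∂μ := by
  have hquad : ∀ t : ℝ, 0 ≤ (∫ x, g x ∂μ) * (t * t) + (-2 * ∫ x, g x * f x ∂μ) * t +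
      ∫ x, g x * f x ^ 2 ∂μ := fun t =>
    calc 0 ≤ ∫ x, g x * (f x - t) ^ 2 ∂μ :=
          integral_nonneg_of_ae (by filter_upwards [hg] with x hx using mul_nonneg hx (sq_nonneg _))
      _ = ∫ x, ((t * t) * g x + (-2 * t) * (g x * f x) + g x * f x ^ 2) ∂μ := by
          congr 1; ext x; ring
      _ = _ := by
          have hlin : Integrable (fun x => t * t * g x + -2 * t * (g x * f x)) μ :=
            (hg_int.const_mul _).add (hgf.const_mul _)
          rw [integral_add hlin hgf2,
            integral_add (hg_int.const_mul _) (hgf.const_mul _), integral_const_mul,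
            integral_const_mul]
          ring
  have := discrim_le_zero hquad
  rw [discrim] at this
  linarith

theorem sum_sq_integral_mul_le_of_sum_eq_one {α ι : Type*} [MeasurableSpace α] {μ : Measure α}
    [IsFiniteMeasure μ] {f : α → ℝ} (hf : MemLp f 2 μ) {s : Finset ι} {w : ι → α → ℝ} {c : ℝ}
    (hw_meas : ∀ i ∈ s, AEStronglyMeasurable (w i) μ) (hw_nonneg : ∀ i ∈ s, 0 ≤ᵐ[μ] w i)
    (hw_sum : ∀ᵐ x ∂μ, ∑ i ∈ s, w i x = 1) (hw_int : ∀ i ∈ s, ∫ x, w i x ∂μ = c) :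
    ∑ i ∈ s, (∫ x, w i x * f x ∂μ) ^ 2 ≤ c * ∫ x, f x ^ 2 ∂μ := by
  have hw_le : ∀ i ∈ s, ∀ᵐ x ∂μ, ‖w i x‖ ≤ 1 := fun i hi => by
    filter_upwards [hw_sum, s.eventually_all.2 hw_nonneg] with x hsum hnn
    rw [Real.norm_eq_abs, abs_of_nonneg (hnn i hi), ← hsum]
    exact single_le_sum hnn hi
  have hw_mul : ∀ i ∈ s, ∀ {h : α → ℝ}, Integrable h μ → Integrable (fun x => w i x * h x) μ :=
    fun i hi _ hh => hh.bdd_mul (hw_meas i hi) (hw_le i hi)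
  have hf_sq : Integrable (fun x => f x ^ 2) μ := hf.integrable_sq
  calc ∑ i ∈ s, (∫ x, w i x * f x ∂μ) ^ 2
      ≤ ∑ i ∈ s, c * ∫ x, w i x * f x ^ 2 ∂μ := sum_le_sum fun i hi => by
        rw [← hw_int i hi]
        exact sq_integral_mul_le_integral_mul_integral_mul_sq (hw_nonneg i hi)
          (Integrable.of_bound (hw_meas i hi) 1 (hw_le i hi))
          (hw_mul i hi (hf.integrable one_le_two)) (hw_mul i hi hf_sq)
    _ = c * ∫ x, ∑ i ∈ s, w i x * f x ^ 2 ∂μ := by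
        rw [← mul_sum, integral_finsetSum s fun i hi => hw_mul i hi hf_sq]
    _ = c * ∫ x, f x ^ 2 ∂μ := by
        congr 1
        refine integral_congr_ae ?_
        filter_upwards [hw_sum] with x hx
        rw [← sum_mul, hx, one_mul]

namespace bernsteinPolynomial

theorem eval_nonneg {n ν : ℕ} {x : ℝ} (hx : x ∈ Set.Icc (0 : ℝ) 1) :
    0 ≤ (bernsteinPolynomial ℝ n ν).eval x := by
  have h0 := hx.1
  have h1 : 0 ≤ 1 - x := sub_nonneg.2 hx.2
  simp only [bernsteinPolynomial, eval_mul, eval_pow, eval_natCast, eval_X, eval_sub, eval_one]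
  positivity

theorem sum_eval (n : ℕ) (x : ℝ) :
    ∑ ν ∈ range (n + 1), (bernsteinPolynomial ℝ n ν).eval x = 1 := by
  rw [← eval_finsetSum, bernsteinPolynomial.sum, eval_one]

theorem integral_eval_eq_integral_eval_succ {n ν : ℕ} (h : ν < n) :
    ∫ x in (0 : ℝ)..1, (bernsteinPolynomial ℝ n ν).eval x =
      ∫ x in (0 : ℝ)..1, (bernsteinPolynomial ℝ n (ν + 1)).eval x := by
  -- `b_{n+1,ν+1}` vanishes at `0` and `1`, and its derivative is `(n+1)(b_{n,ν} - b_{n,ν+1})`.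
  have hftc := intervalIntegral.integral_eq_sub_of_hasDerivAt
    (fun x _ => (bernsteinPolynomial ℝ (n + 1) (ν + 1)).hasDerivAt x)
    ((Polynomial.continuous _).intervalIntegrable 0 1)
  have hint : ∀ k, IntervalIntegrable (fun x => (bernsteinPolynomial ℝ n k).eval x) volume 0 1 :=
    fun k => (Polynomial.continuous _).intervalIntegrable 0 1
  simp only [derivative_succ_aux, eval_mul, eval_sub, eval_add, eval_natCast, eval_one,
    intervalIntegral.integral_const_mul, intervalIntegral.integral_sub (hint _) (hint _),
    eval_at_0, eval_at_1, add_left_inj, h.ne, Nat.succ_ne_zero, if_false, sub_zero,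
    mul_eq_zero, sub_eq_zero] at hftc
  exact hftc.resolve_left (by positivity)

theorem integral_eval {n ν : ℕ} (h : ν ≤ n) :
    ∫ x in (0 : ℝ)..1, (bernsteinPolynomial ℝ n ν).eval x = 1 / (n + 1) := by
  set I := fun k => ∫ x in (0 : ℝ)..1, (bernsteinPolynomial ℝ n k).eval x with hI
  have hconst : ∀ k ≤ n, I k = I 0 := fun k hk => by
    induction k with
    | zero => rfl
    | succ k ih =>
      rw [← ih (by omega)]
      exact (integral_eval_eq_integral_eval_succ (by omega : k < n)).symm
  have hsum : ∑ k ∈ range (n + 1), I k = 1 := by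
    rw [hI, ← intervalIntegral.integral_finsetSum fun k _ =>
      (Polynomial.continuous _).intervalIntegrable 0 1]
    simp [sum_eval]
  rw [sum_congr rfl fun k hk => hconst k (mem_range_succ_iff.1 hk), sum_const, card_range,
    nsmul_eq_mul] at hsum
  show I ν = _
  rw [hconst ν h, eq_div_iff (by positivity)]
  push_cast at hsum
  linarith

end bernsteinPolynomial

theorem measurableSet_unitSquare : MeasurableSet unitSquare :=
  measurableSet_Icc.prod measurableSet_Icc

theorem isCompact_unitSquare : IsCompact unitSquare :=
  isCompact_Icc.prod isCompact_Icc

instance : IsFiniteMeasure (volume.restrict unitSquare) :=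
  isFiniteMeasure_restrict.2 isCompact_unitSquare.measure_lt_top.ne

theorem setIntegral_unitSquare_mul (f g : ℝ → ℝ) :
    ∫ β in unitSquare, f β.1 * g β.2 = (∫ x in (0 : ℝ)..1, f x) * ∫ x in (0 : ℝ)..1, g x := by
  rw [unitSquare, Measure.volume_eq_prod, setIntegral_prod_mul,
    intervalIntegral.integral_of_le zero_le_one, intervalIntegral.integral_of_le zero_le_one,
    integral_Icc_eq_integral_Ioc, integral_Icc_eq_integral_Ioc]

noncomputable def moments (ψ : ℝ × ℝ → ℝ) (k1 k2 : ℕ) : ℝ :=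
  ∫ β in unitSquare, β.1 ^ k1 * β.2 ^ k2 * ψ β

section moments

variable {ψ : ℝ × ℝ → ℝ}

theorem MeasureTheory.IntegrableOn.continuous_mul_unitSquare (hψ : IntegrableOn ψ unitSquare)
    {g : ℝ × ℝ → ℝ} (hg : Continuous g) : IntegrableOn (fun β => g β * ψ β) unitSquare :=
  hψ.continuousOn_mul hg.continuousOn isCompact_unitSquare

theorem D1_moments (hψ : IntegrableOn ψ unitSquare) :
    D1 (moments ψ) = moments fun β => (1 - β.1) * ψ β := by
  ext k1 k2
  rw [D1, moments, moments, ← integral_sub (hψ.continuous_mul_unitSquare (by fun_prop))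
    (hψ.continuous_mul_unitSquare (by fun_prop)), moments]
  congr 1; ext β; ring

theorem D2_moments (hψ : IntegrableOn ψ unitSquare) :
    D2 (moments ψ) = moments fun β => (1 - β.2) * ψ β := by
  ext k1 k2
  rw [D2, moments, moments, ← integral_sub (hψ.continuous_mul_unitSquare (by fun_prop))
    (hψ.continuous_mul_unitSquare (by fun_prop)), moments]
  congr 1; ext β; ring

theorem iterate_D1_moments (hψ : IntegrableOn ψ unitSquare) (j : ℕ) :
    D1^[j] (moments ψ) = moments fun β => (1 - β.1) ^ j * ψ β := by
  induction j with
  | zero => simp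
  | succ j ih =>
    rw [Function.iterate_succ_apply', ih, D1_moments (hψ.continuous_mul_unitSquare (by fun_prop))]
    congr; ext β; ring

theorem iterate_D2_moments (hψ : IntegrableOn ψ unitSquare) (l : ℕ) :
    D2^[l] (moments ψ) = moments fun β => (1 - β.2) ^ l * ψ β := by
  induction l with
  | zero => simp
  | succ l ih =>
    rw [Function.iterate_succ_apply', ih, D2_moments (hψ.continuous_mul_unitSquare (by fun_prop))]
    congr; ext β; ring

end moments

noncomputable def bernsteinWeight (n1 n2 : ℕ) (k : ℕ × ℕ) (β : ℝ × ℝ) : ℝ :=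
  (bernsteinPolynomial ℝ n1 k.1).eval β.1 * (bernsteinPolynomial ℝ n2 k.2).eval β.2

section bernsteinWeight

variable {n1 n2 : ℕ}

theorem continuous_bernsteinWeight (k : ℕ × ℕ) : Continuous (bernsteinWeight n1 n2 k) :=
  ((Polynomial.continuous _).comp continuous_fst).mul
    ((Polynomial.continuous _).comp continuous_snd)

theorem bernsteinWeight_nonneg {k : ℕ × ℕ} {β : ℝ × ℝ} (hβ : β ∈ unitSquare) :
    0 ≤ bernsteinWeight n1 n2 k β :=
  mul_nonneg (bernsteinPolynomial.eval_nonneg hβ.1) (bernsteinPolynomial.eval_nonneg hβ.2)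

theorem sum_bernsteinWeight (β : ℝ × ℝ) :
    ∑ k ∈ range (n1 + 1) ×ˢ range (n2 + 1), bernsteinWeight n1 n2 k β = 1 := by
  rw [sum_product]
  simp only [bernsteinWeight]
  rw [← sum_mul_sum, bernsteinPolynomial.sum_eval, bernsteinPolynomial.sum_eval, one_mul]

theorem setIntegral_bernsteinWeight {k : ℕ × ℕ} (hk : k ∈ range (n1 + 1) ×ˢ range (n2 + 1)) :
    ∫ β in unitSquare, bernsteinWeight n1 n2 k β = 1 / ((n1 + 1) * (n2 + 1)) := by
  obtain ⟨hk1, hk2⟩ := mem_product.1 hk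
  refine (setIntegral_unitSquare_mul (fun x => (bernsteinPolynomial ℝ n1 k.1).eval x)
    fun x => (bernsteinPolynomial ℝ n2 k.2).eval x).trans ?_
  rw [bernsteinPolynomial.integral_eval (mem_range_succ_iff.1 hk1),
    bernsteinPolynomial.integral_eval (mem_range_succ_iff.1 hk2), div_mul_div_comm, one_mul]

theorem choose_mul_choose_mul_iterate_D1_iterate_D2_moments {ψ : ℝ × ℝ → ℝ}
    (hψ : IntegrableOn ψ unitSquare) (k1 k2 : ℕ) :
    (n1.choose k1 : ℝ) * n2.choose k2 * (D1^[n1 - k1] (D2^[n2 - k2] (moments ψ))) k1 k2 =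
      ∫ β in unitSquare, bernsteinWeight n1 n2 (k1, k2) β * ψ β := by
  rw [iterate_D2_moments hψ, iterate_D1_moments (hψ.continuous_mul_unitSquare (by fun_prop)),
    moments, ← integral_const_mul]
  congr 1; ext β
  simp only [bernsteinWeight, bernsteinPolynomial, eval_mul, eval_pow, eval_natCast, eval_X,
    eval_sub, eval_one]
  ring

end bernsteinWeight

/-- Necessity part of the `L²` Hausdorff moment problem on `[0,1]²`: the moment
double sequence of `φ ∈ L²([0,1]²)` satisfies
`(n₁+1)(n₂+1) ∑ₖ [binom(n₁,k₁)binom(n₂,k₂) Δ₁^{n₁−k₁}Δ₂^{n₂−k₂} m_k]² ≤ ‖φ‖₂²`,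
where `‖φ‖₂² = ∫_Ω φ²`. -/
theorem moment_sum_le_L2_norm_sq (φ : ℝ × ℝ → ℝ)
    (hφ : MemLp φ 2 (volume.restrict unitSquare)) (m : ℕ → ℕ → ℝ)
    (hm : ∀ k1 k2 : ℕ, m k1 k2 = ∫ β in unitSquare, β.1 ^ k1 * β.2 ^ k2 * φ β) :
    ∀ n1 n2 : ℕ,
      ((n1 : ℝ) + 1) * ((n2 : ℝ) + 1) *
        ∑ k1 ∈ Finset.range (n1 + 1), ∑ k2 ∈ Finset.range (n2 + 1),
          ((n1.choose k1 : ℝ) * (n2.choose k2 : ℝ) *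
            (D1^[n1 - k1] (D2^[n2 - k2] m)) k1 k2) ^ 2
        ≤ ∫ β in unitSquare, (φ β) ^ 2 := by
  intro n1 n2
  obtain rfl : m = moments φ := funext₂ hm
  have hbound := sum_sq_integral_mul_le_of_sum_eq_one hφ (w := bernsteinWeight n1 n2)
    (fun k _ => (continuous_bernsteinWeight k).aestronglyMeasurable)
    (fun _ _ => (ae_restrict_mem measurableSet_unitSquare).mono fun _ => bernsteinWeight_nonneg)
    (ae_of_all _ sum_bernsteinWeight) fun _ => setIntegral_bernsteinWeight
  rw [sum_product] at hbound
  simp only [← choose_mul_choose_mul_iterate_D1_iterate_D2_moments (hφ.integrable one_le_two)]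
    at hbound
  calc _ ≤ ((n1 : ℝ) + 1) * ((n2 : ℝ) + 1) *
        (1 / ((n1 + 1) * (n2 + 1)) * ∫ β in unitSquare, φ β ^ 2) := by gcongr
    _ = ∫ β in unitSquare, φ β ^ 2 := by field_simp
end

section
/- Let 0 < δ < 1, let Ω_x and Ω_y be the 3×3 real matrices Ω_x = [[0,0,0],[0,0,−1],[0,1,0]] and Ω_y = [[0,0,1],[0,0,0],[−1,0,0]], let u, v : ℝ → ℝ, and let M : ℝ × [1−δ,1+δ] → ℝ³ be continuous, with ∂M/∂t existing and continuous on ℝ × [1−δ,1+δ], satisfying the Bloch ensemble equation ∂M/∂t(t,ε) = ε (u(t) Ω_y + v(t) Ω_x) M(t,ε) for all t and all ε ∈ [1−δ,1+δ]. Then for each k ∈ ℕ, the k-th ensemble moment m_k(t) = ∫_{1−δ}^{1+δ} ε^k M(t,ε) dε is differentiable in t and satisfies d/dt m_k(t) = (u(t) Ω_y + v(t) Ω_x) m_{k+1}(t). -/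
/-!
Since `∂M/∂t` is jointly continuous, it is bounded on `[t - 1, t + 1] × [1 - δ, 1 + δ]`, so
dominated convergence lets us differentiate `m_k` under the integral sign:
`m_k'(t) = ∫ ε^k • ε • A(t) M(t, ε) dε` with `A(t) = u(t) Ω_y + v(t) Ω_x`. The matrix `A(t)` does
not depend on `ε` and leaves the integral, and the two powers of `ε` merge into `ε^(k+1)`.
-/

open MeasureTheory

/-- The generator of rotations around the `x`-axis. -/
def Omx : Matrix (Fin 3) (Fin 3) ℝ := !![0, 0, 0; 0, 0, -1; 0, 1, 0]

/-- The generator of rotations around the `y`-axis. -/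
def Omy : Matrix (Fin 3) (Fin 3) ℝ := !![0, 0, 1; 0, 0, 0; -1, 0, 0]

open Set Metric Matrix

section ParametricIntegral

variable {𝕜 X E : Type*} [RCLike 𝕜] [TopologicalSpace X] [T2Space X] [MeasurableSpace X]
  [OpensMeasurableSpace X] {μ : Measure X} [IsFiniteMeasureOnCompacts μ]
  [NormedAddCommGroup E] [NormedSpace ℝ E] [NormedSpace 𝕜 E]

theorem hasDerivAt_setIntegral_of_continuousOn_deriv {F F' : 𝕜 → X → E} {K : Set X}
    (hK : IsCompact K) (hF : ∀ s, ContinuousOn (F s) K)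
    (hF' : ContinuousOn (Function.uncurry F') (univ ×ˢ K))
    (hderiv : ∀ s, ∀ x ∈ K, HasDerivAt (F · x) (F' s x) s) (t : 𝕜) :
    HasDerivAt (fun s => ∫ x in K, F s x ∂μ) (∫ x in K, F' t x ∂μ) t := by
  obtain ⟨C, hC⟩ : ∃ C, ∀ p ∈ closedBall t 1 ×ˢ K, ‖Function.uncurry F' p‖ ≤ C :=
    ((isCompact_closedBall t 1).prod hK).exists_bound_of_continuousOn
      (hF'.mono (prod_mono (subset_univ _) le_rfl))
  have hbound : ∀ᵐ x ∂μ.restrict K, ∀ s ∈ ball t 1, ‖F' s x‖ ≤ C :=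
    (ae_restrict_iff' hK.measurableSet).2 <| .of_forall fun x hx s hs =>
      hC (s, x) ⟨ball_subset_closedBall hs, hx⟩
  have hdiff : ∀ᵐ x ∂μ.restrict K, ∀ s ∈ ball t 1, HasDerivAt (F · x) (F' s x) s :=
    (ae_restrict_iff' hK.measurableSet).2 <| .of_forall fun x hx s _ => hderiv s x hx
  exact (hasDerivAt_integral_of_dominated_loc_of_deriv_le (ball_mem_nhds t one_pos)
    (.of_forall fun s => ((hF s).integrableOn_compact hK).aestronglyMeasurable)
    ((hF t).integrableOn_compact hK)
    ((hF'.uncurry_left t (mem_univ t)).integrableOn_compact hK).aestronglyMeasurable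
    hbound (integrableOn_const hK.measure_ne_top) hdiff).2

end ParametricIntegral

theorem Matrix.mulVec_integral {α m n : Type*} [MeasurableSpace α] {μ : Measure α} [Fintype m]
    [Fintype n] (A : Matrix m n ℝ) {f : α → n → ℝ} (hf : Integrable f μ) :
    A *ᵥ ∫ x, f x ∂μ = ∫ x, A *ᵥ f x ∂μ :=
  ((Matrix.mulVecLin A).toContinuousLinearMap.integral_comp_comm hf).symm

theorem bloch_moment_dynamics_general (δ : ℝ)
    (u v : ℝ → ℝ) (M : ℝ → ℝ → Fin 3 → ℝ)
    (hMcont : ContinuousOn (fun p : ℝ × ℝ => M p.1 p.2)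
      (Set.univ ×ˢ Set.Icc (1 - δ) (1 + δ)))
    (hBloch : ∀ t : ℝ, ∀ ε ∈ Set.Icc (1 - δ) (1 + δ),
      HasDerivAt (fun s => M s ε)
        (ε • (u t • Omy + v t • Omx).mulVec (M t ε)) t)
    (hM'cont : ContinuousOn
      (fun p : ℝ × ℝ => p.2 • (u p.1 • Omy + v p.1 • Omx).mulVec (M p.1 p.2))
      (Set.univ ×ˢ Set.Icc (1 - δ) (1 + δ))) :
    ∀ (k : ℕ) (t : ℝ),
      HasDerivAt (fun s => ∫ ε in Set.Icc (1 - δ) (1 + δ), ε ^ k • M s ε)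
        ((u t • Omy + v t • Omx).mulVec
          (∫ ε in Set.Icc (1 - δ) (1 + δ), ε ^ (k + 1) • M t ε)) t := by
  intro k t
  set A : ℝ → Matrix (Fin 3) (Fin 3) ℝ := fun s => u s • Omy + v s • Omx
  have hmoment_cont : ∀ (j : ℕ) s, ContinuousOn (fun ε => ε ^ j • M s ε) (Icc (1 - δ) (1 + δ)) :=
    fun j s => (continuousOn_pow j).smul (hMcont.uncurry_left s (mem_univ s))
  have hderiv := hasDerivAt_setIntegral_of_continuousOn_deriv (μ := volume)
    (F' := fun s ε => ε ^ k • ε • A s *ᵥ M s ε) isCompact_Icc (hmoment_cont k)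
    ((continuousOn_snd.pow k).smul hM'cont)
    (fun s ε hε => (hBloch s ε hε).const_smul (ε ^ k)) t
  have hshift : ∀ ε : ℝ, ε ^ k • ε • A t *ᵥ M t ε = A t *ᵥ (ε ^ (k + 1) • M t ε) := fun ε => by
    rw [Matrix.mulVec_smul, smul_smul, ← pow_succ]
  simp only [hshift] at hderiv
  rwa [Matrix.mulVec_integral _ ((hmoment_cont (k + 1) t).integrableOn_compact isCompact_Icc)]

/-- The moment system of the Bloch ensemble
`∂M/∂t(t,ε) = ε (u(t) Ω_y + v(t) Ω_x) M(t,ε)`, `ε ∈ [1−δ,1+δ]`, is the chain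
network `d/dt m_k(t) = (u(t) Ω_y + v(t) Ω_x) m_{k+1}(t)`, where
`m_k(t) = ∫_{1−δ}^{1+δ} ε^k M(t,ε) dε`. -/
theorem bloch_moment_dynamics (δ : ℝ) (hδ0 : 0 < δ) (hδ1 : δ < 1)
    (u v : ℝ → ℝ) (M : ℝ → ℝ → Fin 3 → ℝ)
    (hMcont : ContinuousOn (fun p : ℝ × ℝ => M p.1 p.2)
      (Set.univ ×ˢ Set.Icc (1 - δ) (1 + δ)))
    (hBloch : ∀ t : ℝ, ∀ ε ∈ Set.Icc (1 - δ) (1 + δ),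
      HasDerivAt (fun s => M s ε)
        (ε • (u t • Omy + v t • Omx).mulVec (M t ε)) t)
    (hM'cont : ContinuousOn
      (fun p : ℝ × ℝ => p.2 • (u p.1 • Omy + v p.1 • Omx).mulVec (M p.1 p.2))
      (Set.univ ×ˢ Set.Icc (1 - δ) (1 + δ))) :
    ∀ (k : ℕ) (t : ℝ),
      HasDerivAt (fun s => ∫ ε in Set.Icc (1 - δ) (1 + δ), ε ^ k • M s ε)
        ((u t • Omy + v t • Omx).mulVec
          (∫ ε in Set.Icc (1 - δ) (1 + δ), ε ^ (k + 1) • M t ε)) t :=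
  bloch_moment_dynamics_general δ u v M hMcont hBloch hM'cont
end
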